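/- arXiv:1003.1506 — 2 statements merged into one kernel-verified Lean document; each statement's English description precedes it below -/
import Mathlib

section
/- In the single-cell nearest-neighbour setting, assume |λ| < 1 and let s₋, s₊ ∈ {−1,+1}. Then the partition-function ratio f^s(η; s₋, s₊) := Z(η; s₋, s₊) Z(η; 0, 0) / ( Z(η; 0, s₊) Z(η; s₋, 0) ) − 1 is well defined (the denominators are nonzero) and satisfies the exact identity f^s(η; s₋, s₊) = λ² s₋ s₊ ( Φ^{1,Q}(η) − Φ^1(η) Φ^Q(η) ) / ( (1 − λ s₋ Φ^1(η)) (1 − λ s₊ Φ^Q(η)) ). -/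
open Finset

/-- The spin value of a site: `true ↦ +1`, `false ↦ -1`. -/
def spin (b : Bool) : ℤ := if b then 1 else -1

/-- Configurations of a `Q`-site cell with total magnetization `η`. -/
def cellSet (Q : ℕ) (η : ℤ) : Finset (Fin Q → Bool) :=
  univ.filter (fun τ => ∑ i, spin (τ i) = η)

/-- The first site of the cell. -/
def site1 (Q : ℕ) (hQ : 0 < Q) : Fin Q := ⟨0, hQ⟩

/-- The last site of the cell. -/
def siteQ (Q : ℕ) (hQ : 0 < Q) : Fin Q := ⟨Q - 1, Nat.sub_lt hQ one_pos⟩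

/-- The internal nearest-neighbour Hamiltonian `h(τ) = K Σ_{i=1}^{Q-1} τ(i) τ(i+1)`. -/
noncomputable def hcell (K : ℝ) (Q : ℕ) (τ : Fin Q → Bool) : ℝ :=
  K * ∑ i : Fin (Q - 1),
    ((spin (τ ⟨i.val, by have := i.isLt; omega⟩) : ℝ) *
     (spin (τ ⟨i.val + 1, by have := i.isLt; omega⟩) : ℝ))

/-- The free-boundary single-cell partition function `Ẑ(η)`. -/
noncomputable def Zhat (β K : ℝ) (Q : ℕ) (η : ℤ) : ℝ :=
  ∑ τ ∈ cellSet Q η, Real.exp (-β * hcell K Q τ)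

/-- `Φ^1(η)`: expectation of the first spin under `P̂_η`. -/
noncomputable def Phi1 (β K : ℝ) (Q : ℕ) (hQ : 0 < Q) (η : ℤ) : ℝ :=
  (∑ τ ∈ cellSet Q η, (spin (τ (site1 Q hQ)) : ℝ) * Real.exp (-β * hcell K Q τ)) /
    Zhat β K Q η

/-- `Φ^Q(η)`: expectation of the last spin under `P̂_η`. -/
noncomputable def PhiQ (β K : ℝ) (Q : ℕ) (hQ : 0 < Q) (η : ℤ) : ℝ :=
  (∑ τ ∈ cellSet Q η, (spin (τ (siteQ Q hQ)) : ℝ) * Real.exp (-β * hcell K Q τ)) /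
    Zhat β K Q η

/-- `Φ^{1,Q}(η)`: expectation of the product of the endpoint spins under `P̂_η`. -/
noncomputable def Phi1Q (β K : ℝ) (Q : ℕ) (hQ : 0 < Q) (η : ℤ) : ℝ :=
  (∑ τ ∈ cellSet Q η,
      ((spin (τ (site1 Q hQ)) * spin (τ (siteQ Q hQ)) : ℤ) : ℝ) *
        Real.exp (-β * hcell K Q τ)) /
    Zhat β K Q η

/-- The single-cell partition function with boundary conditions `s₋, s₊ ∈ {-1,0,+1}`
(`0` encoding a free boundary). -/
noncomputable def ZB (β K : ℝ) (Q : ℕ) (hQ : 0 < Q) (η : ℤ) (sm sp : ℝ) : ℝ :=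
  ∑ τ ∈ cellSet Q η,
    Real.exp (-β * (K * sm * (spin (τ (site1 Q hQ)) : ℝ) + hcell K Q τ +
      K * (spin (τ (siteQ Q hQ)) : ℝ) * sp))

/-!
For `ε = ±1` one has `exp (-x ε) = cosh x * (1 - ε tanh x)`, so a fixed boundary spin `s`
multiplies the Boltzmann weight of `τ` by `cosh (βK) * (1 - λ s σ)`, `σ` the adjacent end spin.
Averaging under `P̂_η` gives `Z(η; s₋, 0) = cosh (βK) Ẑ (1 - λ s₋ Φ¹)`, similarly at the other
end, and `Z(η; s₋, s₊) = cosh² (βK) Ẑ (1 - λ s₋ Φ¹ - λ s₊ Φ^Q + λ² s₋ s₊ Φ^{1,Q})`; the identity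
is then algebra. The denominators are positive because `|λ| < 1`, `|Φ| ≤ 1`, and `Ẑ > 0` since
the parity condition makes the set of configurations with magnetization `η` nonempty.
-/

theorem Real.exp_neg_mul_eq_cosh_mul_one_sub_tanh_mul (x ε : ℝ) (hε : |ε| = 1) :
    Real.exp (-(x * ε)) = Real.cosh x * (1 - Real.tanh x * ε) := by
  have hcosh : Real.cosh x ≠ 0 := (Real.cosh_pos x).ne'
  rcases (abs_eq zero_le_one).mp hε with rfl | rfl <;>
    rw [Real.tanh_eq_sinh_div_cosh] <;> field_simp
  · rw [Real.cosh_sub_sinh]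
  · rw [sub_neg_eq_add, Real.cosh_add_sinh]

theorem sum_exp_neg_mul_mul {ι : Type*} (s : Finset ι) (a w : ι → ℝ) (ha : ∀ i, |a i| = 1)
    (x ε : ℝ) (hε : |ε| = 1) :
    ∑ i ∈ s, Real.exp (-(x * (ε * a i))) * w i =
      Real.cosh x * (∑ i ∈ s, w i - Real.tanh x * ε * ∑ i ∈ s, a i * w i) := by
  rw [mul_sub, mul_sum, mul_sum, mul_sum, ← sum_sub_distrib]
  refine sum_congr rfl fun i _ => ?_
  rw [Real.exp_neg_mul_eq_cosh_mul_one_sub_tanh_mul _ _ (by rw [abs_mul, hε, ha, one_mul])]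
  ring

theorem abs_sum_mul_div_sum_le_one {ι : Type*} (s : Finset ι) (f w : ι → ℝ)
    (hw : ∀ i ∈ s, 0 ≤ w i) (hf : ∀ i ∈ s, |f i| ≤ 1) :
    |(∑ i ∈ s, f i * w i) / ∑ i ∈ s, w i| ≤ 1 := by
  rw [abs_div]
  refine div_le_one_of_le₀ ?_ (abs_nonneg _)
  calc |∑ i ∈ s, f i * w i| ≤ ∑ i ∈ s, |f i * w i| := abs_sum_le_sum_abs _ _
    _ ≤ ∑ i ∈ s, w i := sum_le_sum fun i hi => by
        rw [abs_mul, abs_of_nonneg (hw i hi)]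
        exact mul_le_of_le_one_left (hw i hi) (hf i hi)
    _ ≤ |∑ i ∈ s, w i| := le_abs_self _

theorem one_sub_mul_mul_pos {t s x : ℝ} (ht : |t| < 1) (hs : |s| ≤ 1) (hx : |x| ≤ 1) :
    0 < 1 - t * s * x := by
  have : |t * s * x| < 1 := by
    rw [abs_mul, abs_mul]
    calc |t| * |s| * |x| ≤ |t| * 1 * 1 := by gcongr
      _ < 1 := by linarith
  linarith [le_abs_self (t * s * x)]

theorem abs_spin (b : Bool) : |(spin b : ℝ)| = 1 := by
  cases b <;> simp [spin]

theorem sum_spin_eq_two_mul_card_sub (Q : ℕ) (τ : Fin Q → Bool) :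
    ∑ i, spin (τ i) = 2 * #{i | τ i = true} - Q := by
  have : ∀ b, spin b = 2 * (if b = true then 1 else 0) - 1 := by decide
  simp only [this, sum_sub_distrib, ← mul_sum, sum_boole, sum_const, card_univ, Fintype.card_fin]
  simp

theorem cellSet_nonempty {Q : ℕ} {η : ℤ} (hη : |η| ≤ Q) (hpar : (η + Q) % 2 = 0) :
    (cellSet Q η).Nonempty := by
  obtain ⟨k, hkQ, hk⟩ : ∃ k : ℕ, k ≤ Q ∧ 2 * (k : ℤ) - Q = η := by
    have := abs_le.mp hη
    exact ⟨((η + Q) / 2).toNat, by omega, by omega⟩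
  refine ⟨fun i => decide (i.val < k), ?_⟩
  simp only [cellSet, mem_filter, mem_univ, true_and, sum_spin_eq_two_mul_card_sub,
    decide_eq_true_eq, Fin.card_filter_val_lt, min_eq_right hkQ, hk]

section Cell

variable (β K : ℝ) {Q : ℕ} (hQ : 0 < Q) (η : ℤ)

theorem Zhat_pos (hη : |η| ≤ Q) (hpar : (η + Q) % 2 = 0) : 0 < Zhat β K Q η :=
  sum_pos (fun _ _ => Real.exp_pos _) (cellSet_nonempty hη hpar)

theorem abs_Phi1_le_one : |Phi1 β K Q hQ η| ≤ 1 :=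
  abs_sum_mul_div_sum_le_one _ _ _ (fun _ _ => (Real.exp_pos _).le) fun _ _ => (abs_spin _).le

theorem abs_PhiQ_le_one : |PhiQ β K Q hQ η| ≤ 1 :=
  abs_sum_mul_div_sum_le_one _ _ _ (fun _ _ => (Real.exp_pos _).le) fun _ _ => (abs_spin _).le

theorem ZB_zero_zero : ZB β K Q hQ η 0 0 = Zhat β K Q η := by
  simp [ZB, Zhat]

theorem ZB_eq_sum (sm sp : ℝ) :
    ZB β K Q hQ η sm sp = ∑ τ ∈ cellSet Q η,
      Real.exp (-(β * K * (sm * spin (τ (site1 Q hQ))))) *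
        (Real.exp (-(β * K * (sp * spin (τ (siteQ Q hQ))))) * Real.exp (-β * hcell K Q τ)) :=
  sum_congr rfl fun τ _ => by rw [← Real.exp_add, ← Real.exp_add]; ring_nf

theorem ZB_zero_left (hZ : Zhat β K Q η ≠ 0) {sp : ℝ} (hsp : |sp| = 1) :
    ZB β K Q hQ η 0 sp =
      Real.cosh (β * K) * Zhat β K Q η * (1 - Real.tanh (β * K) * sp * PhiQ β K Q hQ η) := by
  simp only [ZB_eq_sum, zero_mul, mul_zero, neg_zero, Real.exp_zero, one_mul]
  rw [sum_exp_neg_mul_mul _ _ _ (fun _ => abs_spin _) _ _ hsp, PhiQ, ← Zhat]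
  field_simp

theorem ZB_zero_right (hZ : Zhat β K Q η ≠ 0) {sm : ℝ} (hsm : |sm| = 1) :
    ZB β K Q hQ η sm 0 =
      Real.cosh (β * K) * Zhat β K Q η * (1 - Real.tanh (β * K) * sm * Phi1 β K Q hQ η) := by
  simp only [ZB_eq_sum, zero_mul, mul_zero, neg_zero, Real.exp_zero, one_mul]
  rw [sum_exp_neg_mul_mul _ _ _ (fun _ => abs_spin _) _ _ hsm, Phi1, ← Zhat]
  field_simp

theorem ZB_eq (hZ : Zhat β K Q η ≠ 0) {sm sp : ℝ} (hsm : |sm| = 1) (hsp : |sp| = 1) :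
    ZB β K Q hQ η sm sp = Real.cosh (β * K) ^ 2 * Zhat β K Q η *
      (1 - Real.tanh (β * K) * sm * Phi1 β K Q hQ η - Real.tanh (β * K) * sp * PhiQ β K Q hQ η
        + Real.tanh (β * K) ^ 2 * sm * sp * Phi1Q β K Q hQ η) := by
  have hswap : ∀ τ : Fin Q → Bool, (spin (τ (site1 Q hQ)) : ℝ) *
      (Real.exp (-(β * K * (sp * spin (τ (siteQ Q hQ))))) * Real.exp (-β * hcell K Q τ)) =
      Real.exp (-(β * K * (sp * spin (τ (siteQ Q hQ))))) *
        ((spin (τ (site1 Q hQ)) : ℝ) * Real.exp (-β * hcell K Q τ)) :=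
    fun _ => mul_left_comm _ _ _
  have hpair : ∀ τ : Fin Q → Bool, (spin (τ (siteQ Q hQ)) : ℝ) *
      ((spin (τ (site1 Q hQ)) : ℝ) * Real.exp (-β * hcell K Q τ)) =
      ((spin (τ (site1 Q hQ)) * spin (τ (siteQ Q hQ)) : ℤ) : ℝ) *
        Real.exp (-β * hcell K Q τ) :=
    fun _ => by push_cast; ring
  rw [ZB_eq_sum, sum_exp_neg_mul_mul _ _ _ (fun _ => abs_spin _) _ _ hsm,
    sum_exp_neg_mul_mul _ _ _ (fun _ => abs_spin _) _ _ hsp, sum_congr rfl fun τ _ => hswap τ,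
    sum_exp_neg_mul_mul _ _ _ (fun _ => abs_spin _) _ _ hsp, sum_congr rfl fun τ _ => hpair τ,
    Phi1, PhiQ, Phi1Q, ← Zhat]
  field_simp
  ring

end Cell

/-- exact identity for the short-range error term `f^s` in terms of the
endpoint correlation functions, with `λ = tanh(βK)`. -/
theorem statement14 (β K : ℝ) (Q : ℕ) (hQ : 2 ≤ Q)
    (η : ℤ) (hη : |η| ≤ (Q : ℤ)) (hpar : (η + Q) % 2 = 0)
    (sm sp : ℝ) (hsm : sm = 1 ∨ sm = -1) (hsp : sp = 1 ∨ sp = -1) :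
    ZB β K Q (by omega) η 0 sp ≠ 0 ∧ ZB β K Q (by omega) η sm 0 ≠ 0 ∧
    ZB β K Q (by omega) η sm sp * ZB β K Q (by omega) η 0 0 /
        (ZB β K Q (by omega) η 0 sp * ZB β K Q (by omega) η sm 0) - 1
      = Real.tanh (β * K) ^ 2 * sm * sp *
          (Phi1Q β K Q (by omega) η - Phi1 β K Q (by omega) η * PhiQ β K Q (by omega) η) /
        ((1 - Real.tanh (β * K) * sm * Phi1 β K Q (by omega) η) *
         (1 - Real.tanh (β * K) * sp * PhiQ β K Q (by omega) η)) := by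
  have hQ₀ : 0 < Q := by omega
  have hZ : 0 < Zhat β K Q η := Zhat_pos β K η hη hpar
  have hsm₁ : |sm| = 1 := (abs_eq zero_le_one).mpr hsm
  have hsp₁ : |sp| = 1 := (abs_eq zero_le_one).mpr hsp
  have hc : 0 < Real.cosh (β * K) := Real.cosh_pos _
  have hleft := one_sub_mul_mul_pos (Real.abs_tanh_lt_one (β * K)) hsm₁.le
    (abs_Phi1_le_one β K hQ₀ η)
  have hright := one_sub_mul_mul_pos (Real.abs_tanh_lt_one (β * K)) hsp₁.le
    (abs_PhiQ_le_one β K hQ₀ η)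
  rw [ZB_zero_left β K hQ₀ η hZ.ne' hsp₁, ZB_zero_right β K hQ₀ η hZ.ne' hsm₁,
    ZB_eq β K hQ₀ η hZ.ne' hsm₁ hsp₁, ZB_zero_zero]
  refine ⟨by positivity, by positivity, ?_⟩
  field_simp
  ring
end

section
/- In the one-dimensional periodic coarse-graining setting with M even, with combined Hamiltonian H = H^s + H^l: for every coarse configuration η with F⁻¹(η) ≠ ∅, the exact coarse-grained Hamiltonian H̄_M(η), defined by e^{−βH̄_M(η)} = E[e^{−βH(σ)} | F(σ) = η] (expectation under the uniform measure on {σ : F(σ)=η}), satisfies the exact representation e^{−βH̄_M(η)} = e^{−βH̄^{(0)}_M(η)} · Σ_{σ : F(σ)=η} ( ∏_{0 ≤ j ≤ k ≤ M−1} (1 + f^l_{jk}(σ)) · ∏_{k odd} (1 + f^s_{k−1,k+1}(η(k); σ^{k−1}, σ^{k+1})) ) ν(σ|η), where e^{−βH̄^{(0)}_M(η)} = e^{−βH̄^{l,(0)}(η)} · ∏_{k odd} Z_k(η(k); 0, 0)^{−1} · ∏_{k even} Z_{k−1,k,k+1}(η; 0, 0), and f^l_{jk}(σ) = e^{−βΔ_{jk}J(σ)}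 − 1. -/
open Finset

/-- The coarse cell `C_k = {kQ, …, (k+1)Q - 1}` inside the lattice `Fin (M*Q)`. -/
def cell (M Q : ℕ) (k : Fin M) : Finset (Fin (M * Q)) :=
  univ.filter (fun x => x.val / Q = k.val)

/-- The coarse-graining map `F(σ)(k) = Σ_{x ∈ C_k} σ(x)`. -/
def cg (M Q : ℕ) (σ : Fin (M * Q) → Bool) (k : Fin M) : ℤ :=
  ∑ x ∈ cell M Q k, spin (σ x)

/-- Configurations of the coarse cell `C_k` with total magnetization `m`. -/
def cellCfgs (M Q : ℕ) (k : Fin M) (m : ℤ) :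
    Finset ({x : Fin (M * Q) // x ∈ cell M Q k} → Bool) :=
  univ.filter (fun τ => ∑ x, spin (τ x) = m)

/-- The configuration obtained from `σ` by replacing its values on the cell `C_k`
by the cell configuration `τ`. -/
def upd (M Q : ℕ) (k : Fin M) (σ : Fin (M * Q) → Bool)
    (τ : {x : Fin (M * Q) // x ∈ cell M Q k} → Bool) : Fin (M * Q) → Bool :=
  fun x => if h : x ∈ cell M Q k then τ ⟨x, h⟩ else σ x

noncomputable section

variable (M Q : ℕ) [NeZero M] (β : ℝ)
  (HK WK : Fin M → (Fin (M * Q) → Bool) → ℝ) (η : Fin M → ℤ)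

/-- `Z_k(η(k); σ^{k-1}, σ^{k+1})`: the single-cell partition function of `C_k` with
boundary conditions given by `σ` on the neighbouring cells (cell indices mod `M`). -/
def Zfull (k : Fin M) (σ : Fin (M * Q) → Bool) : ℝ :=
  (∑ τ ∈ cellCfgs M Q k (η k),
      Real.exp (-β * (WK (k - 1) (upd M Q k σ τ) + HK k (upd M Q k σ τ) +
        WK k (upd M Q k σ τ))))
    / ((cellCfgs M Q k (η k)).card : ℝ)

/-- `Z_k(η(k); σ^{k-1}, 0)`: boundary condition on the left, free on the right. -/
def ZfreeR (k : Fin M) (σ : Fin (M * Q) → Bool) : ℝ :=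
  (∑ τ ∈ cellCfgs M Q k (η k),
      Real.exp (-β * (WK (k - 1) (upd M Q k σ τ) + HK k (upd M Q k σ τ))))
    / ((cellCfgs M Q k (η k)).card : ℝ)

/-- `Z_k(η(k); 0, σ^{k+1})`: free on the left, boundary condition on the right. -/
def ZfreeL (k : Fin M) (σ : Fin (M * Q) → Bool) : ℝ :=
  (∑ τ ∈ cellCfgs M Q k (η k),
      Real.exp (-β * (HK k (upd M Q k σ τ) + WK k (upd M Q k σ τ))))
    / ((cellCfgs M Q k (η k)).card : ℝ)

/-- `Z_k(η(k); 0, 0)`: the free-boundary single-cell partition function. -/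
def Zzero (k : Fin M) : ℝ :=
  (∑ τ ∈ cellCfgs M Q k (η k),
      Real.exp (-β * HK k (upd M Q k (fun _ => false) τ)))
    / ((cellCfgs M Q k (η k)).card : ℝ)

/-- `Z_{k-1,k,k+1}(η; 0, 0)`: the three-cell free-boundary partition function. -/
def Z3 (k : Fin M) : ℝ :=
  (∑ τm ∈ cellCfgs M Q (k - 1) (η (k - 1)), ∑ τ ∈ cellCfgs M Q k (η k),
      ∑ τp ∈ cellCfgs M Q (k + 1) (η (k + 1)),
      (let ρ := upd M Q (k + 1)
          (upd M Q k (upd M Q (k - 1) (fun _ => false) τm) τ) τp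
       Real.exp (-β * (HK (k - 1) ρ + WK (k - 1) ρ + HK k ρ + WK k ρ + HK (k + 1) ρ))))
    / (((cellCfgs M Q (k - 1) (η (k - 1))).card : ℝ) *
       ((cellCfgs M Q k (η k)).card : ℝ) *
       ((cellCfgs M Q (k + 1) (η (k + 1))).card : ℝ))

/-- The reference conditional measure `ν(σ|η)` of the multiscale decomposition. -/
def nuM (σ : Fin (M * Q) → Bool) : ℝ :=
  (∏ k ∈ univ.filter (fun k : Fin M => k.val % 2 = 1),
      Real.exp (-β * (HK k σ + WK (k - 1) σ + WK k σ)) / Zfull M Q β HK WK η k σ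
        / ((cellCfgs M Q k (η k)).card : ℝ))
  *
  ∏ k ∈ univ.filter (fun k : Fin M => k.val % 2 = 0),
      Real.exp (-β * HK k σ) * ZfreeR M Q β HK WK η (k + 1) σ *
          ZfreeL M Q β HK WK η (k - 1) σ
        / Z3 M Q β HK WK η k / ((cellCfgs M Q k (η k)).card : ℝ)

/-- The short-range error term `f^s_{k-1,k+1}(η(k); σ^{k-1}, σ^{k+1})`. -/
def fsOdd (k : Fin M) (σ : Fin (M * Q) → Bool) : ℝ :=
  Zfull M Q β HK WK η k σ * Zzero M Q β HK η k /
    (ZfreeL M Q β HK WK η k σ * ZfreeR M Q β HK WK η k σ) - 1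

end

/-- The long-range Hamiltonian `H^l(σ) = -(1/2) Σ_{x ≠ y} J(x-y) σ(x) σ(y)`. -/
noncomputable def Hlong (M Q : ℕ) (J : ℤ → ℝ) (σ : Fin (M * Q) → Bool) : ℝ :=
  -(1 / 2) * ∑ x : Fin (M * Q), ∑ y ∈ univ.filter (fun y => y ≠ x),
    J ((x.val : ℤ) - (y.val : ℤ)) * (spin (σ x) : ℝ) * (spin (σ y) : ℝ)

/-- Cell-averaged couplings `J̄(k,l)`. -/
noncomputable def Jbar (M Q : ℕ) (J : ℤ → ℝ) (k l : Fin M) : ℝ :=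
  if k = l then
    (∑ x ∈ cell M Q k, ∑ y ∈ (cell M Q k).filter (fun y => y ≠ x),
        J ((x.val : ℤ) - (y.val : ℤ))) / ((Q : ℝ) * ((Q : ℝ) - 1))
  else
    (∑ x ∈ cell M Q k, ∑ y ∈ cell M Q l, J ((x.val : ℤ) - (y.val : ℤ))) / ((Q : ℝ) ^ 2)

/-- The coarse-grained long-range Hamiltonian `H̄^{l,(0)}(η)`. -/
noncomputable def Hlong0 (M Q : ℕ) (J : ℤ → ℝ) (η : Fin M → ℤ) : ℝ :=
  -(1 / 2) * (∑ k : Fin M, ∑ l ∈ univ.filter (fun l => l ≠ k),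
      Jbar M Q J k l * (η k : ℝ) * (η l : ℝ))
  - (1 / 2) * ∑ k : Fin M, Jbar M Q J k k * ((η k : ℝ) ^ 2 - (Q : ℝ))

/-- The pair term `Δ_{jk}J(σ)` of the decomposition of `H^l - H̄^{l,(0)} ∘ F`. -/
noncomputable def DeltaJ (M Q : ℕ) (J : ℤ → ℝ) (k l : Fin M)
    (σ : Fin (M * Q) → Bool) : ℝ :=
  -(1 / 2) * (2 - if k = l then 1 else 0) *
    ∑ x ∈ cell M Q k, ∑ y ∈ (cell M Q l).filter (fun y => y ≠ x),
      (J ((x.val : ℤ) - (y.val : ℤ)) - Jbar M Q J k l) * (spin (σ x) : ℝ) * (spin (σ y) : ℝ)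

/-! The identity is purely algebraic and is checked one configuration `σ ∈ F⁻¹(η)` at a time.
Restricting to the cells identifies the uniform measure on `F⁻¹(η)` with `⊗ₖ Pₖ(·|η(k))`.
Splitting `J(x-y) = (J(x-y) - J̄(k,l)) + J̄(k,l)` for `x ∈ Cₖ`, `y ∈ Cₗ`, the `J̄`-part of `H^l(σ)`
only sees the cell magnetizations and is `H̄^{l,(0)}(η)`; the rest is symmetric in `(k,l)`, so it
regroups as `Σ_{j ≤ k} Δ_{jk}J(σ)`. Since `M` is even, each `W_{k,k+1}` meets exactly one odd
cell, so `e^{-βH^s}` factors into odd-cell factors `e^{-β(W_{k-1,k} + H_k + W_{k,k+1})}` and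
even-cell factors `e^{-βH_k}`. The one-sided partition functions that `ν` attaches to an even
cell live on its odd neighbours `k ± 1`, where they cancel those in `1 + f^s`;
`Z_k(·; σ^{k-1}, σ^{k+1})` cancels against `ν`, and the free partition functions against the
prefactor. -/

section FinsetSums

variable {ι γ G : Type*} [DecidableEq γ]

lemma sum_exp_div_card_pos {s : Finset ι} (hs : s.Nonempty) (f : ι → ℝ) :
    0 < (∑ τ ∈ s, Real.exp (f τ)) / #s :=
  div_pos (sum_pos (fun τ _ => Real.exp_pos _) hs) (by exact_mod_cast hs.card_pos)

lemma sum_sum_filter_ne [AddCommGroup G] (A B : Finset γ) (g : γ → γ → G) :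
    ∑ x ∈ A, ∑ y ∈ B.filter (fun y => y ≠ x), g x y
      = ∑ x ∈ A, ∑ y ∈ B, g x y - ∑ x ∈ A ∩ B, g x x := by
  rw [← sum_ite_mem, ← sum_sub_distrib]
  refine sum_congr rfl fun x _ => ?_
  rw [filter_ne']
  split_ifs with hx
  · exact sum_erase_eq_sub hx
  · rw [erase_eq_of_notMem hx, sub_zero]

lemma sum_sum_filter_ne_comm [AddCommMonoid G] (A B : Finset γ) (g : γ → γ → G) :
    ∑ x ∈ A, ∑ y ∈ B.filter (fun y => y ≠ x), g x y
      = ∑ y ∈ B, ∑ x ∈ A.filter (fun x => x ≠ y), g x y :=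
  sum_comm' fun x y => by simp only [mem_filter]; tauto

lemma sum_sum_eq_sum_filter_le [Fintype ι] [LinearOrder ι] (T : ι → ι → ℝ)
    (hT : ∀ k l, T k l = T l k) :
    ∑ k, ∑ l, T k l
      = ∑ p ∈ (univ ×ˢ univ : Finset (ι × ι)).filter (fun p => p.1 ≤ p.2),
          (2 - if p.1 = p.2 then 1 else 0) * T p.1 p.2 := by
  have hlt : ∑ p ∈ (univ ×ˢ univ : Finset (ι × ι)).filter (fun p => ¬ p.1 ≤ p.2), T p.1 p.2
      = ∑ p ∈ (univ ×ˢ univ : Finset (ι × ι)).filter (fun p => p.1 ≤ p.2),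
          if p.1 = p.2 then 0 else T p.1 p.2 := by
    rw [sum_ite, sum_const_zero, zero_add, filter_filter]
    refine sum_nbij' Prod.swap Prod.swap ?_ ?_ (fun _ _ => rfl) (fun _ _ => rfl)
      fun p _ => hT p.1 p.2 <;>
    · intro p
      simp only [mem_filter, mem_product, mem_univ, true_and, Prod.fst_swap, Prod.snd_swap]
      grind
  rw [← sum_product', ← sum_filter_add_sum_filter_not _ (fun p : ι × ι => p.1 ≤ p.2), hlt,
    ← sum_add_distrib]
  refine sum_congr rfl fun p _ => ?_
  split_ifs <;> ring

end FinsetSums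

section Cells

variable {M Q : ℕ}

lemma mem_cell {k : Fin M} {x : Fin (M * Q)} : x ∈ cell M Q k ↔ x.divNat = k := by
  simp [cell, Fin.ext_iff, Fin.coe_divNat]

lemma card_cell (k : Fin M) : #(cell M Q k) = Q := by
  calc #(cell M Q k) = #({k} ×ˢ (univ : Finset (Fin Q))) :=
        card_equiv finProdFinEquiv.symm fun x => by simp [mem_cell, Fin.divNat, eq_comm]
    _ = Q := by simp

lemma sum_eq_sum_sum_cell {α : Type*} [AddCommMonoid α] (f : Fin (M * Q) → α) :
    ∑ x, f x = ∑ k, ∑ x ∈ cell M Q k, f x := by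
  rw [← sum_fiberwise univ Fin.divNat f]
  congr! with k
  ext x
  simp [mem_cell]

def restrictCellsEquiv (M Q : ℕ) :
    (Fin (M * Q) → Bool) ≃ ∀ k : Fin M, cell M Q k → Bool :=
  ((Equiv.sigmaFiberEquiv Fin.divNat).symm.trans
    (Equiv.sigmaCongrRight fun _ => Equiv.subtypeEquivRight fun _ => mem_cell.symm)).arrowCongr
    (Equiv.refl Bool) |>.trans (Equiv.piCurry fun _ _ => Bool)

lemma card_filter_cg_eq (η : Fin M → ℤ) :
    #{σ : Fin (M * Q) → Bool | cg M Q σ = η} = ∏ k, #(cellCfgs M Q k (η k)) := by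
  rw [← Fintype.card_piFinset]
  refine card_equiv (restrictCellsEquiv M Q) fun σ => ?_
  simp only [mem_filter, mem_univ, true_and, Fintype.mem_piFinset, cellCfgs, funext_iff, cg]
  exact forall_congr' fun k => by rw [← sum_coe_sort]; rfl

lemma cellCfgs_nonempty {η : Fin M → ℤ} {σ : Fin (M * Q) → Bool} (hσ : cg M Q σ = η)
    (k : Fin M) :
    (cellCfgs M Q k (η k)).Nonempty :=
  ⟨restrictCellsEquiv M Q σ k, mem_filter.mpr
    ⟨mem_univ _, (sum_coe_sort (cell M Q k) fun x => spin (σ x)).trans (congrFun hσ k)⟩⟩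

end Cells

section Parity

variable {M : ℕ} {α : Type*} [CommMonoid α]

lemma prod_odd_mul_prod_even (f : Fin M → α) :
    (∏ k ∈ univ.filter (fun k : Fin M => k.val % 2 = 1), f k) *
      ∏ k ∈ univ.filter (fun k : Fin M => k.val % 2 = 0), f k = ∏ k, f k := by
  rw [← prod_filter_mul_prod_filter_not univ (fun k : Fin M => k.val % 2 = 1)]
  congr 2
  ext k
  simp only [mem_filter, mem_univ, true_and]
  omega

variable [NeZero M]

lemma Fin.val_add_one_mod_two (hM : Even M) (k : Fin M) :
    (k + 1).val % 2 = (k.val + 1) % 2 := by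
  have hM1 : M ≠ 1 := by rintro rfl; simp at hM
  rw [Fin.val_add, Fin.val_one', Nat.one_mod_eq_one.mpr hM1,
    Nat.mod_mod_of_dvd _ (even_iff_two_dvd.mp hM)]

lemma prod_even_add_one_eq_prod_odd (hM : Even M) (f : Fin M → α) :
    ∏ k ∈ univ.filter (fun k : Fin M => k.val % 2 = 0), f (k + 1)
      = ∏ k ∈ univ.filter (fun k : Fin M => k.val % 2 = 1), f k :=
  prod_equiv (Equiv.addRight 1) (fun k => by
      simp only [mem_filter, mem_univ, true_and, Equiv.coe_addRight, Fin.val_add_one_mod_two hM]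
      omega)
    fun _ _ => rfl

lemma prod_even_sub_one_eq_prod_odd (hM : Even M) (f : Fin M → α) :
    ∏ k ∈ univ.filter (fun k : Fin M => k.val % 2 = 0), f (k - 1)
      = ∏ k ∈ univ.filter (fun k : Fin M => k.val % 2 = 1), f k :=
  prod_equiv (Equiv.subRight 1) (fun k => by
      simp only [mem_filter, mem_univ, true_and, Equiv.subRight_apply]
      have := Fin.val_add_one_mod_two hM (k - 1)
      rw [sub_add_cancel] at this
      omega)
    fun _ _ => rfl

lemma prod_mul_prod_eq_prod_odd_mul_prod_even (hM : Even M) (h w : Fin M → α) :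
    (∏ k, h k) * ∏ k, w k
      = (∏ k ∈ univ.filter (fun k : Fin M => k.val % 2 = 1), h k * w (k - 1) * w k)
        * ∏ k ∈ univ.filter (fun k : Fin M => k.val % 2 = 0), h k := by
  have hw : ∏ k ∈ univ.filter (fun k : Fin M => k.val % 2 = 0), w k
      = ∏ k ∈ univ.filter (fun k : Fin M => k.val % 2 = 1), w (k - 1) := by
    simpa using prod_even_add_one_eq_prod_odd hM fun k => w (k - 1)
  rw [← prod_odd_mul_prod_even h, ← prod_odd_mul_prod_even w, hw]
  simp only [prod_mul_distrib]
  ac_rfl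

end Parity

section ShortRange

variable {M Q : ℕ} [NeZero M] (β : ℝ) (HK WK : Fin M → (Fin (M * Q) → Bool) → ℝ)
  {η : Fin M → ℤ}

lemma Z3_pos (hη : ∀ k, (cellCfgs M Q k (η k)).Nonempty) (k : Fin M) :
    0 < Z3 M Q β HK WK η k := by
  have hcard := fun k => (hη k).card_pos
  refine div_pos (sum_pos (fun _ _ => sum_pos (fun _ _ => sum_pos (fun _ _ => Real.exp_pos _)
    (hη _)) (hη _)) (hη _)) ?_
  have := hcard (k - 1); have := hcard k; have := hcard (k + 1)
  positivity

lemma exp_short_div_card_eq (hM : Even M) {σ : Fin (M * Q) → Bool} (hσ : cg M Q σ = η) :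
    Real.exp (-β * ((∑ k, HK k σ) + ∑ k, WK k σ)) / ∏ k, (#(cellCfgs M Q k (η k)) : ℝ)
      = ((∏ k ∈ univ.filter (fun k : Fin M => k.val % 2 = 1), (Zzero M Q β HK η k)⁻¹) *
          ∏ k ∈ univ.filter (fun k : Fin M => k.val % 2 = 0), Z3 M Q β HK WK η k) *
        ((∏ k ∈ univ.filter (fun k : Fin M => k.val % 2 = 1), (1 + fsOdd M Q β HK WK η k σ)) *
          nuM M Q β HK WK η σ) := by
  have hη := cellCfgs_nonempty hσ
  have hexp : Real.exp (-β * ((∑ k, HK k σ) + ∑ k, WK k σ))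
      = (∏ k ∈ univ.filter (fun k : Fin M => k.val % 2 = 1),
          Real.exp (-β * (HK k σ + WK (k - 1) σ + WK k σ))) *
        ∏ k ∈ univ.filter (fun k : Fin M => k.val % 2 = 0), Real.exp (-β * HK k σ) := by
    rw [mul_add, Real.exp_add, mul_sum, mul_sum, Real.exp_sum, Real.exp_sum,
      prod_mul_prod_eq_prod_odd_mul_prod_even hM]
    congr 1
    refine prod_congr rfl fun k _ => ?_
    rw [← Real.exp_add, ← Real.exp_add]
    ring_nf
  have hZf : ∏ k ∈ univ.filter (fun k : Fin M => k.val % 2 = 1), Zfull M Q β HK WK η k σ ≠ 0 :=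
    prod_ne_zero_iff.mpr fun k _ => (sum_exp_div_card_pos (hη k) _).ne'
  have hZL : ∏ k ∈ univ.filter (fun k : Fin M => k.val % 2 = 1), ZfreeL M Q β HK WK η k σ ≠ 0 :=
    prod_ne_zero_iff.mpr fun k _ => (sum_exp_div_card_pos (hη k) _).ne'
  have hZR : ∏ k ∈ univ.filter (fun k : Fin M => k.val % 2 = 1), ZfreeR M Q β HK WK η k σ ≠ 0 :=
    prod_ne_zero_iff.mpr fun k _ => (sum_exp_div_card_pos (hη k) _).ne'
  have hZz : ∏ k ∈ univ.filter (fun k : Fin M => k.val % 2 = 1), Zzero M Q β HK η k ≠ 0 :=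
    prod_ne_zero_iff.mpr fun k _ => (sum_exp_div_card_pos (hη k) _).ne'
  have hZ3 : ∏ k ∈ univ.filter (fun k : Fin M => k.val % 2 = 0), Z3 M Q β HK WK η k ≠ 0 :=
    prod_ne_zero_iff.mpr fun k _ => (Z3_pos β HK WK hη k).ne'
  rw [hexp, ← prod_odd_mul_prod_even fun k => (#(cellCfgs M Q k (η k)) : ℝ)]
  unfold nuM fsOdd
  simp only [add_sub_cancel, prod_mul_distrib, prod_div_distrib, prod_inv_distrib,
    prod_even_add_one_eq_prod_odd hM fun k => ZfreeR M Q β HK WK η k σ,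
    prod_even_sub_one_eq_prod_odd hM fun k => ZfreeL M Q β HK WK η k σ]
  field_simp

end ShortRange

section LongRange

variable {M Q : ℕ} {η : Fin M → ℤ} {σ : Fin (M * Q) → Bool}

lemma sum_spin_cell (hσ : cg M Q σ = η) (k : Fin M) :
    ∑ x ∈ cell M Q k, (spin (σ x) : ℝ) = η k := by
  rw [← congrFun hσ k, cg, Int.cast_sum]

lemma cell_inter_cell (k l : Fin M) :
    cell M Q k ∩ cell M Q l = if k = l then cell M Q k else ∅ := by
  split_ifs with h
  · rw [h, inter_self]
  · ext x
    simp only [mem_inter, mem_cell, notMem_empty, iff_false]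
    rintro ⟨rfl, rfl⟩
    exact h rfl

lemma sum_sum_cell_spin_mul_spin (hσ : cg M Q σ = η) (k l : Fin M) :
    ∑ x ∈ cell M Q k, ∑ y ∈ (cell M Q l).filter (fun y => y ≠ x),
        (spin (σ x) : ℝ) * (spin (σ y) : ℝ)
      = η k * η l - if k = l then (Q : ℝ) else 0 := by
  have hsq : ∀ x, (spin (σ x) : ℝ) * (spin (σ x) : ℝ) = 1 := fun x => by
    cases σ x <;> simp [spin]
  rw [sum_sum_filter_ne, ← sum_mul_sum, sum_spin_cell hσ, sum_spin_cell hσ, cell_inter_cell]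
  split_ifs <;> simp [hsq, card_cell]

lemma Jbar_comm (J : ℤ → ℝ) (hJ : ∀ r, J (-r) = J r) (k l : Fin M) :
    Jbar M Q J k l = Jbar M Q J l k := by
  rcases eq_or_ne k l with rfl | h
  · rfl
  rw [Jbar, Jbar, if_neg h, if_neg h.symm, sum_comm]
  congr 1
  refine sum_congr rfl fun _ _ => sum_congr rfl fun _ _ => ?_
  rw [← hJ, neg_sub]

lemma sum_sum_filter_ne_eq_sum_cells {α : Type*} [AddCommMonoid α]
    (g : Fin (M * Q) → Fin (M * Q) → α) :
    ∑ x, ∑ y ∈ univ.filter (fun y => y ≠ x), g x y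
      = ∑ k, ∑ l, ∑ x ∈ cell M Q k, ∑ y ∈ (cell M Q l).filter (fun y => y ≠ x), g x y := by
  rw [sum_eq_sum_sum_cell]
  refine sum_congr rfl fun k _ => ?_
  rw [sum_comm]
  refine sum_congr rfl fun x _ => ?_
  simp only [sum_filter]
  exact sum_eq_sum_sum_cell _

lemma Hlong0_eq_sum_sum (J : ℤ → ℝ) :
    Hlong0 M Q J η
      = -(1 / 2) * ∑ k, ∑ l, Jbar M Q J k l * (η k * η l - if k = l then (Q : ℝ) else 0) := by
  have hrow : ∀ k, ∑ l, Jbar M Q J k l * (η k * η l - if k = l then (Q : ℝ) else 0)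
      = ∑ l ∈ univ.filter (fun l => l ≠ k), Jbar M Q J k l * η k * η l
        + Jbar M Q J k k * ((η k : ℝ) ^ 2 - Q) := by
    intro k
    rw [filter_ne', sum_erase_eq_sub (mem_univ k)]
    simp only [mul_sub, sum_sub_distrib, mul_ite, mul_zero, sum_ite_eq, mem_univ, if_true,
      mul_assoc]
    ring
  rw [Hlong0, sum_congr rfl fun k _ => hrow k, sum_add_distrib]
  ring

lemma Hlong_eq_Hlong0_add_sum_DeltaJ (J : ℤ → ℝ) (hJ : ∀ r, J (-r) = J r)
    (hσ : cg M Q σ = η) :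
    Hlong M Q J σ = Hlong0 M Q J η
      + ∑ p ∈ (univ ×ˢ univ : Finset (Fin M × Fin M)).filter (fun p => p.1 ≤ p.2),
          DeltaJ M Q J p.1 p.2 σ := by
  set T : Fin M → Fin M → ℝ := fun k l => ∑ x ∈ cell M Q k,
    ∑ y ∈ (cell M Q l).filter (fun y => y ≠ x),
      (J ((x.val : ℤ) - (y.val : ℤ)) - Jbar M Q J k l) * (spin (σ x) : ℝ) * (spin (σ y) : ℝ)
  have hT_comm : ∀ k l, T k l = T l k := fun k l => by
    dsimp only [T]
    rw [sum_sum_filter_ne_comm, Jbar_comm J hJ]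
    refine sum_congr rfl fun _ _ => sum_congr rfl fun _ _ => ?_
    rw [← hJ, neg_sub]
    ring
  have hDelta : ∑ p ∈ (univ ×ˢ univ : Finset (Fin M × Fin M)).filter (fun p => p.1 ≤ p.2),
      DeltaJ M Q J p.1 p.2 σ = -(1 / 2) * ∑ k, ∑ l, T k l := by
    rw [sum_sum_eq_sum_filter_le T hT_comm, mul_sum]
    exact sum_congr rfl fun p _ => mul_assoc _ _ _
  rw [hDelta, Hlong0_eq_sum_sum, ← mul_add, ← sum_add_distrib, Hlong,
    sum_sum_filter_ne_eq_sum_cells]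
  congr 1
  refine sum_congr rfl fun k _ => ?_
  rw [← sum_add_distrib]
  refine sum_congr rfl fun l _ => ?_
  rw [← sum_sum_cell_spin_mul_spin hσ, mul_sum, ← sum_add_distrib]
  refine sum_congr rfl fun x _ => ?_
  rw [mul_sum, ← sum_add_distrib]
  refine sum_congr rfl fun y _ => ?_
  ring

end LongRange

theorem statement19_general (M Q : ℕ) [NeZero M] (hMe : Even M)
    (β : ℝ)
    (HK WK : Fin M → (Fin (M * Q) → Bool) → ℝ)
    (J : ℤ → ℝ) (hJ : ∀ r, J (-r) = J r)
    (η : Fin M → ℤ) :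
    (∑ σ ∈ univ.filter (fun σ : Fin (M * Q) → Bool => cg M Q σ = η),
        Real.exp (-β * (((∑ k, HK k σ) + ∑ k, WK k σ) + Hlong M Q J σ))) /
      ((univ.filter (fun σ : Fin (M * Q) → Bool => cg M Q σ = η)).card : ℝ)
    = Real.exp (-β * Hlong0 M Q J η) *
        ((∏ k ∈ univ.filter (fun k : Fin M => k.val % 2 = 1),
            (Zzero M Q β HK η k)⁻¹) *
          ∏ k ∈ univ.filter (fun k : Fin M => k.val % 2 = 0),
            Z3 M Q β HK WK η k) *
        ∑ σ ∈ univ.filter (fun σ : Fin (M * Q) → Bool => cg M Q σ = η),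
          ((∏ p ∈ (univ ×ˢ univ : Finset (Fin M × Fin M)).filter (fun p => p.1 ≤ p.2),
              (1 + (Real.exp (-β * DeltaJ M Q J p.1 p.2 σ) - 1))) *
            (∏ k ∈ univ.filter (fun k : Fin M => k.val % 2 = 1),
              (1 + fsOdd M Q β HK WK η k σ))) *
          nuM M Q β HK WK η σ := by
  rw [card_filter_cg_eq, Nat.cast_prod, sum_div, mul_sum]
  refine sum_congr rfl fun σ hσ => ?_
  replace hσ := (mem_filter.mp hσ).2
  have hMayer : ∏ p ∈ (univ ×ˢ univ : Finset (Fin M × Fin M)).filter (fun p => p.1 ≤ p.2),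
      (1 + (Real.exp (-β * DeltaJ M Q J p.1 p.2 σ) - 1))
      = Real.exp (-β * ∑ p ∈ (univ ×ˢ univ : Finset (Fin M × Fin M)).filter
          (fun p => p.1 ≤ p.2), DeltaJ M Q J p.1 p.2 σ) := by
    simp only [add_sub_cancel, mul_sum, Real.exp_sum]
  rw [hMayer, Hlong_eq_Hlong0_add_sum_DeltaJ J hJ hσ, mul_add, Real.exp_add, mul_div_right_comm,
    exp_short_div_card_eq β HK WK hMe hσ, mul_add, Real.exp_add]
  ring

/-- exact representation of the coarse-grained Gibbs weight
`e^{-βH̄_M(η)} = E[e^{-βH} | F(σ) = η]` for the combined short- and long-range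
Hamiltonian via the multiscale decomposition and the Mayer-type error terms
(one-dimensional periodic lattice, `M` even). -/
theorem statement19 (M Q : ℕ) [NeZero M] (hM : 2 ≤ M) (hMe : Even M) (hQ : 2 ≤ Q)
    (β : ℝ) (hβ : 0 < β)
    (HK WK : Fin M → (Fin (M * Q) → Bool) → ℝ)
    (hHloc : ∀ (k : Fin M) (σ σ' : Fin (M * Q) → Bool),
      (∀ x ∈ cell M Q k, σ x = σ' x) → HK k σ = HK k σ')
    (hWloc : ∀ (k : Fin M) (σ σ' : Fin (M * Q) → Bool),
      (∀ x ∈ cell M Q k ∪ cell M Q (k + 1), σ x = σ' x) → WK k σ = WK k σ')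
    (J : ℤ → ℝ) (hJ : ∀ r, J (-r) = J r)
    (η : Fin M → ℤ)
    (hne : (univ.filter (fun σ : Fin (M * Q) → Bool => cg M Q σ = η)).Nonempty) :
    (∑ σ ∈ univ.filter (fun σ : Fin (M * Q) → Bool => cg M Q σ = η),
        Real.exp (-β * (((∑ k, HK k σ) + ∑ k, WK k σ) + Hlong M Q J σ))) /
      ((univ.filter (fun σ : Fin (M * Q) → Bool => cg M Q σ = η)).card : ℝ)
    = Real.exp (-β * Hlong0 M Q J η) *
        ((∏ k ∈ univ.filter (fun k : Fin M => k.val % 2 = 1),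
            (Zzero M Q β HK η k)⁻¹) *
          ∏ k ∈ univ.filter (fun k : Fin M => k.val % 2 = 0),
            Z3 M Q β HK WK η k) *
        ∑ σ ∈ univ.filter (fun σ : Fin (M * Q) → Bool => cg M Q σ = η),
          ((∏ p ∈ (univ ×ˢ univ : Finset (Fin M × Fin M)).filter (fun p => p.1 ≤ p.2),
              (1 + (Real.exp (-β * DeltaJ M Q J p.1 p.2 σ) - 1))) *
            (∏ k ∈ univ.filter (fun k : Fin M => k.val % 2 = 1),
              (1 + fsOdd M Q β HK WK η k σ))) *
          nuM M Q β HK WK η σ :=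
  statement19_general M Q hMe β HK WK J hJ η
end
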